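/- Consider the nested-sketch iteration: given A ∈ ℝ^{m×n}, b ∈ ℝ^m, x₀ ∈ ℝ^n, and vectors s₁,…,s_K ∈ ℝ^m, set S_j = [s₁ … s_j] ∈ ℝ^{m×j} and Y_j = Aᵀ S_j, assume each Y_j (j = 1,…,K) has full column rank, and define r₀ = b − A x₀, p_j = Y_j (Y_jᵀ Y_j)⁻¹ S_jᵀ r_{j−1}, x_j = x_{j−1} + p_j, r_j = b − A x_j. Then for every k ≤ K: (a) S_kᵀ r_k = 0, i.e., s_iᵀ r_k = 0 for all i ≤ k; (b) Y_{k−1}ᵀ p_k = 0 for k ≥ 2; and (c) the updates are mutually orthogonal: p_iᵀ p_k = 0 whenever 1 ≤ i < k ≤ K. -/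

import Mathlib

open Matrix

/-- `colCat s k` is the matrix `[s 0 … s (k-1)]` whose `l`-th column is `s l`. -/
def colCat {m : ℕ} (s : ℕ → Fin m → ℝ) (k : ℕ) : Matrix (Fin m) (Fin k) ℝ :=
  Matrix.of fun i l => s l.val i

private lemma gram_isUnit {m j : ℕ} (Y : Matrix (Fin m) (Fin j) ℝ)
    (h : LinearIndependent ℝ (fun (l : Fin j) i => Y i l)) :
    IsUnit (Yᵀ * Y) := by
  have hH : Yᴴ = Yᵀ := by ext i l; simp [conjTranspose_apply]
  have hpd : (Yᵀ * Y).PosDef := by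
    refine PosDef.of_dotProduct_mulVec_pos (by rw [← hH]; exact isHermitian_conjTranspose_mul_self Y) fun v hv => ?_
    have hYv : Y *ᵥ v ≠ 0 := by
      intro h0
      apply hv
      have := Fintype.linearIndependent_iff.mp h v ?_
      · funext l; exact this l
      · funext i
        have := congrFun h0 i
        simpa [mulVec, dotProduct, mul_comm] using this
    have : star v ⬝ᵥ (Yᵀ * Y) *ᵥ v = (Y *ᵥ v) ⬝ᵥ (Y *ᵥ v) := by
      rw [star_trivial, ← mulVec_mulVec, dotProduct_mulVec, vecMul_transpose]
    rw [this]
    rcases lt_or_eq_of_le (Finset.sum_nonneg fun i _ => mul_self_nonneg ((Y *ᵥ v) i)) with hlt | heq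
    · exact hlt
    · exact absurd (dotProduct_self_eq_zero.mp heq.symm) hYv
  exact (isUnit_iff_isUnit_det _).mpr hpd.det_pos.ne'.isUnit

private lemma colCat_tmv {m : ℕ} (s : ℕ → Fin m → ℝ) {j : ℕ} (v : Fin m → ℝ) (l : Fin j) :
    ((colCat s j)ᵀ *ᵥ v) l = s l.val ⬝ᵥ v := by
  simp [colCat, mulVec, dotProduct, transpose_apply]

private lemma Yt_mv {m n : ℕ} (A : Matrix (Fin m) (Fin n) ℝ) (s : ℕ → Fin m → ℝ) {j : ℕ}
    (v : Fin n → ℝ) (l : Fin j) :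
    ((Aᵀ * colCat s j)ᵀ *ᵥ v) l = (Aᵀ *ᵥ s l.val) ⬝ᵥ v := by
  simp [colCat, mulVec, mul_apply, dotProduct, transpose_apply]

private lemma proj_id {m j : ℕ} (Y : Matrix (Fin m) (Fin j) ℝ)
    (hu : IsUnit (Yᵀ * Y).det) (w : Fin j → ℝ) :
    Yᵀ *ᵥ (Y *ᵥ ((Yᵀ * Y)⁻¹ *ᵥ w)) = w := by
  rw [mulVec_mulVec, mulVec_mulVec, Matrix.mul_nonsing_inv _ hu, one_mulVec]

/-- Orthogonality properties of the nested-sketch iteration: (a) all previous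
sketch columns are orthogonal to the current residual; (b) `Y_{k−1}ᵀ p_k = 0`;
(c) the updates are mutually orthogonal. -/
theorem stmt9 (m n K : ℕ)
    (A : Matrix (Fin m) (Fin n) ℝ) (b : Fin m → ℝ)
    (s : ℕ → Fin m → ℝ)
    (x p : ℕ → Fin n → ℝ) (r : ℕ → Fin m → ℝ)
    (hfull : ∀ j, 1 ≤ j → j ≤ K →
      LinearIndependent ℝ (fun (l : Fin j) i => (Aᵀ * colCat s j) i l))
    (hr : ∀ j, r j = b - A.mulVec (x j))
    (hp : ∀ j, 1 ≤ j → j ≤ K →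
      p j = (Aᵀ * colCat s j).mulVec
        (((Aᵀ * colCat s j)ᵀ * (Aᵀ * colCat s j))⁻¹.mulVec
          ((colCat s j)ᵀ.mulVec (r (j - 1)))))
    (hx : ∀ j, 1 ≤ j → j ≤ K → x j = x (j - 1) + p j) :
    (∀ k, k ≤ K → ∀ i, i < k → s i ⬝ᵥ r k = 0) ∧
    (∀ k, 2 ≤ k → k ≤ K → (Aᵀ * colCat s (k - 1))ᵀ.mulVec (p k) = 0) ∧
    (∀ i k, 1 ≤ i → i < k → k ≤ K → p i ⬝ᵥ p k = 0) := by
  -- Key identity: Y_kᵀ p_k = S_kᵀ r_{k-1}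
  have key : ∀ k, 1 ≤ k → k ≤ K →
      (Aᵀ * colCat s k)ᵀ *ᵥ (p k) = (colCat s k)ᵀ *ᵥ (r (k - 1)) := by
    intro k h1 h2
    have hu : IsUnit ((Aᵀ * colCat s k)ᵀ * (Aᵀ * colCat s k)).det :=
      (isUnit_iff_isUnit_det _).mp (gram_isUnit _ (hfull k h1 h2))
    rw [hp k h1 h2]
    exact proj_id _ hu _
  -- pointwise form of key
  have keyp : ∀ k, 1 ≤ k → k ≤ K → ∀ (l : ℕ) (hl : l < k),
      (Aᵀ *ᵥ s l) ⬝ᵥ p k = s l ⬝ᵥ r (k - 1) := by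
    intro k h1 h2 l hl
    have := congrFun (key k h1 h2) ⟨l, hl⟩
    rwa [Yt_mv, colCat_tmv] at this
  have ha : ∀ k, k ≤ K → ∀ i, i < k → s i ⬝ᵥ r k = 0 := by
    intro k hk i hik
    have h1 : 1 ≤ k := Nat.lt_of_le_of_lt (Nat.zero_le i) hik
    have hrk : r k = r (k - 1) - A *ᵥ (p k) := by
      rw [hr k, hr (k - 1), hx k h1 hk, mulVec_add, sub_add_eq_sub_sub]
    have e1 : s i ⬝ᵥ (A *ᵥ p k) = s i ⬝ᵥ r (k - 1) := by
      rw [dotProduct_mulVec, ← mulVec_transpose]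
      exact keyp k h1 hk i hik
    rw [hrk, dotProduct_sub, e1, sub_self]
  refine ⟨ha, ?_, ?_⟩
  · intro k h2 hk
    funext l
    rw [Yt_mv]
    have hl : (l : ℕ) < k := lt_of_lt_of_le l.isLt (Nat.sub_le k 1)
    rw [keyp k (by omega) hk l hl]
    exact ha (k - 1) (by omega) l l.isLt
  · intro i k h1 hik hk
    have hik' : i ≤ K := le_of_lt (lt_of_lt_of_le hik hk)
    rw [hp i h1 hik', dotProduct_comm, dotProduct_mulVec, ← mulVec_transpose]
    have hz : (Aᵀ * colCat s i)ᵀ *ᵥ p k = 0 := by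
      funext l
      rw [Yt_mv]
      rw [keyp k (by omega) hk l (by omega)]
      have : (l : ℕ) < k - 1 := by omega
      exact ha (k - 1) (by omega) l this
    rw [hz, zero_dotProduct]
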